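/- Let X and A be nonempty finite sets, let P : X × A → (X → ℝ) be a transition kernel (P(x'|x,a) ≥ 0 and Σ_{x'} P(x'|x,a) = 1), and let r : X × A → ℝ with 0 ≤ r(x,a) ≤ 1. Let π and π' be policies with induced transition matrices P^π, P^{π'} and induced rewards r_π, r_{π'}. Let τ ≥ 1 and suppose both P^π and P^{π'} satisfy the contraction condition: for any two probability distributions μ, μ' on X, the ℓ1-distance between μP^π and μ'P^π (respectively for P^{π'}) is at most exp(−1/τ) times the ℓ1-distance between μ and μ'. Let μ_π, μ_{π'} be stationary distributions of P^π, P^{π'}, set λ_π = Σ_x μ_π(x)·r_π(x), λ_{π'} = Σ_x μ_{π'}(x)·r_{π'}(x), define V_π(x) = Σ_{t=0}^∞ (((P^π)^t r_π)(x) − λ_π) and V_{π'}(x) = Σ_{t=0}^∞ (((P^{π'})^t r_{π'})(x) − λ_{π'}), and define Q_π(x,a) = r(x,a) − λ_π + Σ_{x'} P(x'|x,a)·V_π(x') and Q_{π'}(x,a) = r(x,a) − λ_{π'} + Σ_{x'} P(x'|x,a)·V_{π'}(x'). Let K be an integer with K ≥ 6τ, set N = ⌈4τ·log₂ K⌉ and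 Δ = max_{x∈X} Σ_{a∈A} |π(a|x) − π'(a|x)|. Then for every state-action pair (x, a): |Q_π(x,a) − Q_{π'}(x,a)| ≤ (N² + N + (2τ+3)(N+1))·Δ + 2/K³. -/

import Mathlib

/-!
Write `q = exp (-1 / τ)`. Since the chains contract ℓ1-distances by `q`, started from a Dirac
mass they approach their stationary laws geometrically: `|(Pπ ^ t *ᵥ rπ) x - λπ| ≤ q ^ t`, as a
signed measure of total mass zero integrates a `[0, 1]`-valued reward to at most half its
ℓ1-norm. Hence `V` is an absolutely convergent series whose tail after `N` terms is at most
`q ^ N / (1 - q) ≤ K⁻³`; this is what `N ≥ 4 τ log₂ K` buys. The first `N` terms are compared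
directly: rows of `Pπ` and `Pπ'` are `Δ`-close in ℓ1, so `Pπ ^ t *ᵥ rπ` and `Pπ' ^ t *ᵥ rπ'`
drift apart by at most `Δ / 2` per step, and the stationary laws, being fixed points of a
`q`-contraction and of its `Δ`-perturbation, are `Δ / (1 - q)`-close, so the gains `λπ`, `λπ'`
differ by at most `(τ + 2) Δ / 2`.
-/

open Finset Matrix

section Simplex

variable {ι κ : Type*} [Fintype ι] [Fintype κ]

lemma sum_sub_eq_zero_of_mem_stdSimplex {μ ν : ι → ℝ} (hμ : μ ∈ stdSimplex ℝ ι)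
    (hν : ν ∈ stdSimplex ℝ ι) : ∑ i, (μ i - ν i) = 0 := by
  rw [sum_sub_distrib, hμ.2, hν.2, sub_self]

lemma sum_abs_sub_le_two_of_mem_stdSimplex {μ ν : ι → ℝ} (hμ : μ ∈ stdSimplex ℝ ι)
    (hν : ν ∈ stdSimplex ℝ ι) : ∑ i, |μ i - ν i| ≤ 2 :=
  calc ∑ i, |μ i - ν i| ≤ ∑ i, (μ i + ν i) :=
        sum_le_sum fun i _ => abs_sub_le_iff.2 ⟨by linarith [hν.1 i], by linarith [hμ.1 i]⟩
    _ = 2 := by rw [sum_add_distrib, hμ.2, hν.2]; norm_num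

/-- Shifting `f` to `f - 1/2` costs nothing since `c` sums to zero, and then `|f - 1/2| ≤ 1/2`. -/
lemma abs_dotProduct_le_half_sum_abs {c f : ι → ℝ} (hc : ∑ i, c i = 0)
    (hf : ∀ i, f i ∈ Set.Icc (0 : ℝ) 1) : |c ⬝ᵥ f| ≤ (∑ i, |c i|) / 2 := by
  have hshift : c ⬝ᵥ f = ∑ i, c i * (f i - 1 / 2) := by
    simp only [dotProduct, mul_sub, sum_sub_distrib, ← sum_mul, hc, zero_mul, sub_zero]
  rw [hshift, sum_div]
  refine (abs_sum_le_sum_abs _ _).trans (sum_le_sum fun i _ => ?_)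
  have hfi : |f i - 1 / 2| ≤ 1 / 2 := abs_le.2 ⟨by linarith [(hf i).1], by linarith [(hf i).2]⟩
  rw [abs_mul]
  nlinarith [abs_nonneg (c i)]

lemma abs_dotProduct_le_of_mem_stdSimplex {μ g : ι → ℝ} {B : ℝ} (hμ : μ ∈ stdSimplex ℝ ι)
    (hg : ∀ i, |g i| ≤ B) : |μ ⬝ᵥ g| ≤ B :=
  calc |μ ⬝ᵥ g| ≤ ∑ i, μ i * |g i| := by
        refine (abs_sum_le_sum_abs _ _).trans_eq (sum_congr rfl fun i _ => ?_)
        rw [abs_mul, abs_of_nonneg (hμ.1 i)]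
    _ ≤ ∑ i, μ i * B := sum_le_sum fun i _ => mul_le_mul_of_nonneg_left (hg i) (hμ.1 i)
    _ = B := by rw [← sum_mul, hμ.2, one_mul]

lemma dotProduct_mem_Icc_of_mem_stdSimplex {μ f : ι → ℝ} (hμ : μ ∈ stdSimplex ℝ ι)
    (hf : ∀ i, f i ∈ Set.Icc (0 : ℝ) 1) : μ ⬝ᵥ f ∈ Set.Icc (0 : ℝ) 1 := by
  refine ⟨sum_nonneg fun i _ => mul_nonneg (hμ.1 i) (hf i).1, ?_⟩
  calc μ ⬝ᵥ f ≤ ∑ i, μ i := sum_le_sum fun i _ => mul_le_of_le_one_right (hμ.1 i) (hf i).2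
    _ = 1 := hμ.2

lemma abs_sub_dotProduct_le_half_sum_abs {μ ν f : ι → ℝ} (hμ : μ ∈ stdSimplex ℝ ι)
    (hν : ν ∈ stdSimplex ℝ ι) (hf : ∀ i, f i ∈ Set.Icc (0 : ℝ) 1) :
    |μ ⬝ᵥ f - ν ⬝ᵥ f| ≤ (∑ i, |μ i - ν i|) / 2 := by
  rw [← sub_dotProduct]
  exact abs_dotProduct_le_half_sum_abs (sum_sub_eq_zero_of_mem_stdSimplex hμ hν) hf

lemma abs_dotProduct_sub_dotProduct_le {μ μ' f f' : ι → ℝ} {δ : ℝ}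
    (hμ : μ ∈ stdSimplex ℝ ι) (hμ' : μ' ∈ stdSimplex ℝ ι)
    (hf : ∀ i, f i ∈ Set.Icc (0 : ℝ) 1) (hff' : ∀ i, |f i - f' i| ≤ δ / 2) :
    |μ ⬝ᵥ f - μ' ⬝ᵥ f'| ≤ (∑ i, |μ i - μ' i|) / 2 + δ / 2 := by
  have hsplit : μ ⬝ᵥ f - μ' ⬝ᵥ f' = (μ ⬝ᵥ f - μ' ⬝ᵥ f) + μ' ⬝ᵥ (f - f') := by
    rw [dotProduct_sub]; ring
  rw [hsplit]
  exact (abs_add_le _ _).trans (add_le_add (abs_sub_dotProduct_le_half_sum_abs hμ hμ' hf)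
    (abs_dotProduct_le_of_mem_stdSimplex hμ' hff'))

lemma vecMul_mem_stdSimplex {v : κ → ℝ} {Q : Matrix κ ι ℝ} (hv : v ∈ stdSimplex ℝ κ)
    (hQ : ∀ k, Q k ∈ stdSimplex ℝ ι) : v ᵥ* Q ∈ stdSimplex ℝ ι := by
  refine ⟨fun i => sum_nonneg fun k _ => mul_nonneg (hv.1 k) ((hQ k).1 i), ?_⟩
  simp only [vecMul, dotProduct]
  rw [sum_comm]
  simp only [← mul_sum, (hQ _).2, mul_one, hv.2]

lemma sum_abs_vecMul_le (v : κ → ℝ) (D : Matrix κ ι ℝ) :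
    ∑ i, |(v ᵥ* D) i| ≤ ∑ k, |v k| * ∑ i, |D k i| :=
  calc ∑ i, |(v ᵥ* D) i| ≤ ∑ i, ∑ k, |v k| * |D k i| :=
        sum_le_sum fun i _ => (abs_sum_le_sum_abs _ _).trans_eq (by simp only [abs_mul])
    _ = ∑ k, |v k| * ∑ i, |D k i| := by rw [sum_comm]; simp only [mul_sum]

lemma sum_abs_vecMul_sub_vecMul_le {v w : κ → ℝ} {Q : Matrix κ ι ℝ}
    (hQ : ∀ k, Q k ∈ stdSimplex ℝ ι) :
    ∑ i, |(v ᵥ* Q) i - (w ᵥ* Q) i| ≤ ∑ k, |v k - w k| := by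
  have hrow : ∀ k, ∑ i, |Q k i| = 1 := fun k => by
    rw [← (hQ k).2]; exact sum_congr rfl fun i _ => abs_of_nonneg ((hQ k).1 i)
  simpa only [sub_vecMul, Pi.sub_apply, hrow, mul_one] using sum_abs_vecMul_le (v - w) Q

lemma abs_sub_add_dotProduct_sub_le {p v v' : ι → ℝ} {c g g' G B : ℝ}
    (hp : p ∈ stdSimplex ℝ ι) (hg : |g - g'| ≤ G) (hv : ∀ i, |v i - v' i| ≤ B) :
    |(c - g + ∑ i, p i * v i) - (c - g' + ∑ i, p i * v' i)| ≤ G + B := by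
  have hsplit : (c - g + ∑ i, p i * v i) - (c - g' + ∑ i, p i * v' i)
      = -(g - g') + p ⬝ᵥ (v - v') := by
    rw [dotProduct_sub]; simp only [dotProduct]; ring
  rw [hsplit]
  exact (abs_add_le _ _).trans
    (add_le_add ((abs_neg _).trans_le hg) (abs_dotProduct_le_of_mem_stdSimplex hp hv))

end Simplex

section Series

variable {q : ℝ}

lemma summable_of_abs_le_geometric (hq0 : 0 ≤ q) (hq1 : q < 1) {u : ℕ → ℝ}
    (hu : ∀ t, |u t| ≤ q ^ t) : Summable u :=
  (summable_geometric_of_lt_one hq0 hq1).of_norm_bounded (f := u) hu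

lemma abs_tsum_nat_add_le (hq0 : 0 ≤ q) (hq1 : q < 1) {u : ℕ → ℝ}
    (hu : ∀ t, |u t| ≤ q ^ t) (N : ℕ) : |∑' t, u (t + N)| ≤ q ^ N / (1 - q) := by
  rw [div_eq_mul_inv]
  refine tsum_of_norm_bounded (f := fun t => u (t + N))
    ((hasSum_geometric_of_lt_one hq0 hq1).mul_left (q ^ N)) fun t => ?_
  rw [← pow_add, add_comm N t]
  exact hu (t + N)

lemma abs_tsum_sub_tsum_le (hq0 : 0 ≤ q) (hq1 : q < 1) {u v : ℕ → ℝ}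
    (hu : ∀ t, |u t| ≤ q ^ t) (hv : ∀ t, |v t| ≤ q ^ t) (N : ℕ) :
    |∑' t, u t - ∑' t, v t| ≤ ∑ t ∈ range N, |u t - v t| + 2 * (q ^ N / (1 - q)) := by
  rw [← (summable_of_abs_le_geometric hq0 hq1 hu).sum_add_tsum_nat_add N,
    ← (summable_of_abs_le_geometric hq0 hq1 hv).sum_add_tsum_nat_add N]
  calc _ = |∑ t ∈ range N, (u t - v t) + (∑' t, u (t + N) - ∑' t, v (t + N))| := by
        rw [sum_sub_distrib]; congr 1; ring
    _ ≤ ∑ t ∈ range N, |u t - v t| + (|∑' t, u (t + N)| + |∑' t, v (t + N)|) :=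
        (abs_add_le _ _).trans (add_le_add (abs_sum_le_sum_abs _ _) (abs_sub _ _))
    _ ≤ _ := by
        linarith [abs_tsum_nat_add_le hq0 hq1 hu N, abs_tsum_nat_add_le hq0 hq1 hv N]

end Series

section Rates

open Real

lemma inv_one_sub_exp_neg_inv_le {τ : ℝ} (hτ : 0 < τ) : (1 - exp (-1 / τ))⁻¹ ≤ τ + 1 := by
  have hexp : 1 / τ + 1 ≤ exp (1 / τ) := add_one_le_exp _
  have hq : exp (-1 / τ) = (exp (1 / τ))⁻¹ := by rw [← exp_neg, neg_div]
  have hq1 : exp (-1 / τ) ≤ τ / (τ + 1) := by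
    rw [hq, inv_le_comm₀ (exp_pos _) (by positivity)]
    calc (τ / (τ + 1))⁻¹ = 1 / τ + 1 := by field_simp; ring
      _ ≤ _ := hexp
  have hpos : 0 < 1 - exp (-1 / τ) := by
    have : τ / (τ + 1) < 1 := (div_lt_one (by linarith)).2 (by linarith)
    linarith
  rw [inv_le_iff_one_le_mul₀ hpos]
  have : τ / (τ + 1) * (τ + 1) = τ := by field_simp
  nlinarith

lemma exp_neg_inv_pow_le {τ : ℝ} (hτ : 0 < τ) {K : ℝ} (hK : 1 ≤ K) {N : ℕ}
    (hN : 4 * τ * logb 2 K ≤ N) : exp (-1 / τ) ^ N ≤ (K ^ 4)⁻¹ := by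
  have hlog : log K ≤ logb 2 K := by
    rw [logb, le_div_iff₀ (log_pos one_lt_two)]
    have := log_two_lt_d9
    nlinarith [log_nonneg hK]
  have hexponent : N * (-1 / τ) ≤ -(4 * log K) := by
    have : 4 * log K ≤ N / τ := by rw [le_div_iff₀ hτ]; nlinarith
    linarith [show N * (-1 / τ) = -(N / τ) by ring]
  calc exp (-1 / τ) ^ N = exp (N * (-1 / τ)) := by rw [← exp_nat_mul]
    _ ≤ exp (-(4 * log K)) := exp_le_exp.2 hexponent
    _ = (K ^ 4)⁻¹ := by
        rw [exp_neg, show (4 : ℝ) * log K = (4 : ℕ) * log K by norm_num, exp_nat_mul,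
          exp_log (by positivity)]

lemma exp_neg_inv_pow_div_le {τ K : ℝ} (hτ : 0 < τ) (hK : τ + 1 ≤ K) {N : ℕ}
    (hN : 4 * τ * logb 2 K ≤ N) :
    exp (-1 / τ) ^ N / (1 - exp (-1 / τ)) ≤ 1 / K ^ 3 := by
  have hK0 : 0 < K := by linarith
  have hpos : 0 < 1 - exp (-1 / τ) :=
    sub_pos.2 (exp_lt_one_iff.2 (div_neg_of_neg_of_pos (by norm_num) hτ))
  rw [div_eq_mul_inv]
  calc _ ≤ (K ^ 4)⁻¹ * K :=
        mul_le_mul (exp_neg_inv_pow_le hτ (by linarith) hN)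
          ((inv_one_sub_exp_neg_inv_le hτ).trans hK) (inv_nonneg.2 hpos.le) (by positivity)
    _ = 1 / K ^ 3 := by field_simp

end Rates

section MarkovChain

variable {X : Type*} [Fintype X]

def IsL1Contraction (M : Matrix X X ℝ) (q : ℝ) : Prop :=
  ∀ μ ∈ stdSimplex ℝ X, ∀ ν ∈ stdSimplex ℝ X,
    ∑ y, |((μ - ν) ᵥ* M) y| ≤ q * ∑ x, |μ x - ν x|

/-- By `μ - μ' = (μ - μ') ᵥ* M + μ' ᵥ* (M - M')`, the distance `S` satisfies `S ≤ q S + δ`. -/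
lemma sum_abs_sub_le_of_vecMul_eq {M M' : Matrix X X ℝ} {μ μ' : X → ℝ} {q δ : ℝ}
    (hc : IsL1Contraction M q) (hq : q < 1) (hrow : ∀ x, ∑ y, |M x y - M' x y| ≤ δ)
    (hμ : μ ∈ stdSimplex ℝ X) (hμ' : μ' ∈ stdSimplex ℝ X)
    (hstat : μ ᵥ* M = μ) (hstat' : μ' ᵥ* M' = μ') :
    ∑ x, |μ x - μ' x| ≤ δ / (1 - q) := by
  have hdecomp : μ - μ' = (μ - μ') ᵥ* M + μ' ᵥ* (M - M') := by
    rw [sub_vecMul, vecMul_sub, hstat, hstat']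
    abel
  have hperturb : ∑ y, |(μ' ᵥ* (M - M')) y| ≤ δ :=
    calc _ ≤ ∑ x, |μ' x| * ∑ y, |(M - M') x y| := sum_abs_vecMul_le _ _
      _ ≤ ∑ x, μ' x * δ := sum_le_sum fun x _ => by
          rw [abs_of_nonneg (hμ'.1 x)]
          exact mul_le_mul_of_nonneg_left (hrow x) (hμ'.1 x)
      _ = δ := by rw [← sum_mul, hμ'.2, one_mul]
  have hfixed : ∑ x, |μ x - μ' x| ≤ q * ∑ x, |μ x - μ' x| + δ :=
    calc ∑ x, |μ x - μ' x| = ∑ x, |((μ - μ') ᵥ* M + μ' ᵥ* (M - M')) x| := by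
          rw [← hdecomp]; rfl
      _ ≤ ∑ x, (|((μ - μ') ᵥ* M) x| + |(μ' ᵥ* (M - M')) x|) :=
          sum_le_sum fun x _ => abs_add_le _ _
      _ ≤ q * ∑ x, |μ x - μ' x| + δ := by
          rw [sum_add_distrib]; exact add_le_add (hc μ hμ μ' hμ') hperturb
  rw [le_div_iff₀ (sub_pos.2 hq)]
  linarith

variable [DecidableEq X]

lemma mem_rowStochastic_iff_forall_mem_stdSimplex {M : Matrix X X ℝ} :
    M ∈ rowStochastic ℝ X ↔ ∀ x, M x ∈ stdSimplex ℝ X := by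
  rw [mem_rowStochastic_iff_sum]
  exact ⟨fun h x => ⟨h.1 x, h.2 x⟩, fun h => ⟨fun x => (h x).1, fun x => (h x).2⟩⟩

lemma vecMul_mem_stdSimplex_of_mem_rowStochastic {μ : X → ℝ} {M : Matrix X X ℝ}
    (hμ : μ ∈ stdSimplex ℝ X) (hM : M ∈ rowStochastic ℝ X) : μ ᵥ* M ∈ stdSimplex ℝ X :=
  vecMul_mem_stdSimplex hμ (mem_rowStochastic_iff_forall_mem_stdSimplex.1 hM)

lemma mulVec_mem_Icc_of_mem_rowStochastic {M : Matrix X X ℝ} {f : X → ℝ}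
    (hM : M ∈ rowStochastic ℝ X) (hf : ∀ x, f x ∈ Set.Icc (0 : ℝ) 1) (x : X) :
    (M *ᵥ f) x ∈ Set.Icc (0 : ℝ) 1 :=
  dotProduct_mem_Icc_of_mem_stdSimplex (mem_rowStochastic_iff_forall_mem_stdSimplex.1 hM x) hf

lemma IsL1Contraction.pow {M : Matrix X X ℝ} {q : ℝ} (hc : IsL1Contraction M q) (hq : 0 ≤ q)
    (hM : M ∈ rowStochastic ℝ X) (t : ℕ) : IsL1Contraction (M ^ t) (q ^ t) := by
  induction t with
  | zero => intro μ _ ν _; simp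
  | succ t ih =>
    intro μ hμ ν hν
    have hpow := pow_mem hM t
    calc ∑ y, |((μ - ν) ᵥ* M ^ (t + 1)) y|
        = ∑ y, |((μ ᵥ* M ^ t - ν ᵥ* M ^ t) ᵥ* M) y| := by
          rw [pow_succ, ← vecMul_vecMul, sub_vecMul]
      _ ≤ q * ∑ x, |(μ ᵥ* M ^ t) x - (ν ᵥ* M ^ t) x| :=
          hc _ (vecMul_mem_stdSimplex_of_mem_rowStochastic hμ hpow) _
            (vecMul_mem_stdSimplex_of_mem_rowStochastic hν hpow)
      _ ≤ q * (q ^ t * ∑ x, |μ x - ν x|) := by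
          gcongr
          simpa only [sub_vecMul, Pi.sub_apply] using ih μ hμ ν hν
      _ = q ^ (t + 1) * ∑ x, |μ x - ν x| := by ring

lemma vecMul_pow_eq_of_vecMul_eq {μ : X → ℝ} {M : Matrix X X ℝ} (h : μ ᵥ* M = μ) (t : ℕ) :
    μ ᵥ* M ^ t = μ := by
  induction t with
  | zero => simp
  | succ t ih => rw [pow_succ, ← vecMul_vecMul, ih, h]

structure IsContractingChain (M : Matrix X X ℝ) (q : ℝ) (μ : X → ℝ) : Prop where
  mem_rowStochastic : M ∈ rowStochastic ℝ X
  contraction : IsL1Contraction M q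
  mem_stdSimplex : μ ∈ stdSimplex ℝ X
  vecMul_eq : μ ᵥ* M = μ

/-- Geometric ergodicity: write `(M ^ t *ᵥ r) x - μ ⬝ᵥ r` as `((δ_x - μ) ᵥ* M ^ t) ⬝ᵥ r`. -/
lemma IsContractingChain.abs_mulVec_pow_sub_dotProduct_le {M : Matrix X X ℝ} {q : ℝ}
    {μ r : X → ℝ} (hC : IsContractingChain M q μ) (hq : 0 ≤ q)
    (hr : ∀ x, r x ∈ Set.Icc (0 : ℝ) 1) (t : ℕ) (x : X) :
    |(M ^ t *ᵥ r) x - μ ⬝ᵥ r| ≤ q ^ t := by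
  set δ : X → ℝ := Pi.single x 1
  have hδ : δ ∈ stdSimplex ℝ X := single_mem_stdSimplex ℝ x
  have hpow := pow_mem hC.mem_rowStochastic t
  have hrepr : (M ^ t *ᵥ r) x - μ ⬝ᵥ r = ((δ - μ) ᵥ* M ^ t) ⬝ᵥ r := by
    rw [sub_vecMul, vecMul_pow_eq_of_vecMul_eq hC.vecMul_eq, sub_dotProduct,
      ← dotProduct_mulVec, single_one_dotProduct]
  rw [hrepr]
  calc |((δ - μ) ᵥ* M ^ t) ⬝ᵥ r| ≤ (∑ y, |((δ - μ) ᵥ* M ^ t) y|) / 2 := by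
        refine abs_dotProduct_le_half_sum_abs ?_ hr
        simpa only [sub_vecMul, Pi.sub_apply] using sum_sub_eq_zero_of_mem_stdSimplex
          (vecMul_mem_stdSimplex_of_mem_rowStochastic hδ hpow)
          (vecMul_mem_stdSimplex_of_mem_rowStochastic hC.mem_stdSimplex hpow)
    _ ≤ q ^ t * 2 / 2 := by
        gcongr
        exact (hC.contraction.pow hq hC.mem_rowStochastic t δ hδ μ hC.mem_stdSimplex).trans
          (by gcongr; exact sum_abs_sub_le_two_of_mem_stdSimplex hδ hC.mem_stdSimplex)
    _ = q ^ t := by ring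

/-- One step splits as `M *ᵥ (f - f') + (M - M') *ᵥ f'`: the first term carries the error of the
previous steps, the second adds at most `δ / 2` since `f'` takes values in `[0, 1]`. -/
lemma abs_mulVec_pow_sub_mulVec_pow_le {M M' : Matrix X X ℝ} {r r' : X → ℝ} {δ : ℝ}
    (hM : M ∈ rowStochastic ℝ X) (hM' : M' ∈ rowStochastic ℝ X)
    (hrow : ∀ x, ∑ y, |M x y - M' x y| ≤ δ) (hrr' : ∀ x, |r x - r' x| ≤ δ / 2)
    (hr' : ∀ x, r' x ∈ Set.Icc (0 : ℝ) 1) (t : ℕ) (x : X) :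
    |(M ^ t *ᵥ r) x - (M' ^ t *ᵥ r') x| ≤ (t + 1) * (δ / 2) := by
  induction t generalizing x with
  | zero => simpa using hrr' x
  | succ t ih =>
    set f := M ^ t *ᵥ r
    set f' := M' ^ t *ᵥ r'
    have hsplit : (M ^ (t + 1) *ᵥ r) x - (M' ^ (t + 1) *ᵥ r') x
        = M x ⬝ᵥ (f - f') + (M x - M' x) ⬝ᵥ f' := by
      rw [pow_succ', pow_succ', ← mulVec_mulVec, ← mulVec_mulVec, dotProduct_sub, sub_dotProduct]
      simp only [mulVec, f, f']
      ring
    have hcarry : |M x ⬝ᵥ (f - f')| ≤ (t + 1) * (δ / 2) :=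
      abs_dotProduct_le_of_mem_stdSimplex (mem_rowStochastic_iff_forall_mem_stdSimplex.1 hM x) ih
    have hstep : |(M x - M' x) ⬝ᵥ f'| ≤ δ / 2 := by
      refine (abs_dotProduct_le_half_sum_abs ?_
        (mulVec_mem_Icc_of_mem_rowStochastic (pow_mem hM' t) hr')).trans ?_
      · exact sum_sub_eq_zero_of_mem_stdSimplex
          (mem_rowStochastic_iff_forall_mem_stdSimplex.1 hM x)
          (mem_rowStochastic_iff_forall_mem_stdSimplex.1 hM' x)
      · simpa only [Pi.sub_apply] using div_le_div_of_nonneg_right (hrow x) zero_le_two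
    rw [hsplit]
    calc _ ≤ |M x ⬝ᵥ (f - f')| + |(M x - M' x) ⬝ᵥ f'| := abs_add_le _ _
      _ ≤ (t + 1) * (δ / 2) + δ / 2 := add_le_add hcarry hstep
      _ = ((t + 1 : ℕ) + 1) * (δ / 2) := by push_cast; ring

lemma IsContractingChain.abs_dotProduct_sub_dotProduct_le {M M' : Matrix X X ℝ}
    {r r' μ μ' : X → ℝ} {q q' δ : ℝ} (hC : IsContractingChain M q μ)
    (hC' : IsContractingChain M' q' μ') (hq : q < 1) (hr : ∀ x, r x ∈ Set.Icc (0 : ℝ) 1)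
    (hrow : ∀ x, ∑ y, |M x y - M' x y| ≤ δ) (hrr' : ∀ x, |r x - r' x| ≤ δ / 2) :
    |μ ⬝ᵥ r - μ' ⬝ᵥ r'| ≤ (δ / (1 - q) + δ) / 2 := by
  refine (_root_.abs_dotProduct_sub_dotProduct_le hC.mem_stdSimplex hC'.mem_stdSimplex hr
    hrr').trans ?_
  have := sum_abs_sub_le_of_vecMul_eq hC.contraction hq hrow hC.mem_stdSimplex
    hC'.mem_stdSimplex hC.vecMul_eq hC'.vecMul_eq
  linarith

noncomputable def relativeValue (M : Matrix X X ℝ) (r : X → ℝ) (g : ℝ) (x : X) : ℝ :=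
  ∑' t : ℕ, ((M ^ t *ᵥ r) x - g)

lemma IsContractingChain.abs_relativeValue_sub_le {M M' : Matrix X X ℝ} {r r' μ μ' : X → ℝ}
    {q δ : ℝ} (hC : IsContractingChain M q μ) (hC' : IsContractingChain M' q μ')
    (hq0 : 0 ≤ q) (hq1 : q < 1)
    (hr : ∀ x, r x ∈ Set.Icc (0 : ℝ) 1) (hr' : ∀ x, r' x ∈ Set.Icc (0 : ℝ) 1)
    (hrow : ∀ x, ∑ y, |M x y - M' x y| ≤ δ) (hrr' : ∀ x, |r x - r' x| ≤ δ / 2)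
    (N : ℕ) (x : X) :
    |relativeValue M r (μ ⬝ᵥ r) x - relativeValue M' r' (μ' ⬝ᵥ r') x|
      ≤ N * (N * (δ / 2) + |μ ⬝ᵥ r - μ' ⬝ᵥ r'|) + 2 * (q ^ N / (1 - q)) := by
  refine (abs_tsum_sub_tsum_le hq0 hq1 (hC.abs_mulVec_pow_sub_dotProduct_le hq0 hr · x)
    (hC'.abs_mulVec_pow_sub_dotProduct_le hq0 hr' · x) N).trans ?_
  gcongr
  refine (sum_le_card_nsmul (range N) _ (N * (δ / 2) + |μ ⬝ᵥ r - μ' ⬝ᵥ r'|)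
    fun t ht => ?_).trans_eq (by rw [card_range, nsmul_eq_mul])
  have ht : (t : ℝ) + 1 ≤ N := by exact_mod_cast mem_range.1 ht
  have hδ : 0 ≤ δ := (sum_nonneg fun _ _ => abs_nonneg _).trans (hrow x)
  calc |(M ^ t *ᵥ r) x - μ ⬝ᵥ r - ((M' ^ t *ᵥ r') x - μ' ⬝ᵥ r')|
      ≤ |(M ^ t *ᵥ r) x - (M' ^ t *ᵥ r') x| + |μ ⬝ᵥ r - μ' ⬝ᵥ r'| := by
        rw [sub_sub_sub_comm]; exact abs_sub _ _
    _ ≤ (t + 1) * (δ / 2) + |μ ⬝ᵥ r - μ' ⬝ᵥ r'| := by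
        gcongr
        exact abs_mulVec_pow_sub_mulVec_pow_le hC.mem_rowStochastic hC'.mem_rowStochastic
          hrow hrr' hr' t x
    _ ≤ N * (δ / 2) + |μ ⬝ᵥ r - μ' ⬝ᵥ r'| := by gcongr

end MarkovChain

section Policy

variable {X A : Type*} [Fintype A] {P : X → A → X → ℝ} {π π' : X → A → ℝ}

lemma mem_rowStochastic_of_eq_sum_mul [Fintype X] [DecidableEq X] {M : Matrix X X ℝ}
    (hP : ∀ x a, P x a ∈ stdSimplex ℝ X) (hπ : ∀ x, π x ∈ stdSimplex ℝ A)
    (hM : ∀ x y, M x y = ∑ a, π x a * P x a y) : M ∈ rowStochastic ℝ X :=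
  mem_rowStochastic_iff_forall_mem_stdSimplex.2 fun x =>
    (funext (hM x) : M x = π x ᵥ* P x) ▸ vecMul_mem_stdSimplex (hπ x) (hP x)

lemma mem_Icc_of_eq_sum_mul {r : X → A → ℝ} {ρ : X → ℝ} (hπ : ∀ x, π x ∈ stdSimplex ℝ A)
    (hr : ∀ x a, r x a ∈ Set.Icc (0 : ℝ) 1) (hρ : ∀ x, ρ x = ∑ a, π x a * r x a) (x : X) :
    ρ x ∈ Set.Icc (0 : ℝ) 1 :=
  hρ x ▸ dotProduct_mem_Icc_of_mem_stdSimplex (hπ x) (hr x)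

lemma abs_sub_le_of_eq_sum_mul {r : X → A → ℝ} {ρ ρ' : X → ℝ} (hπ : ∀ x, π x ∈ stdSimplex ℝ A)
    (hπ' : ∀ x, π' x ∈ stdSimplex ℝ A) (hr : ∀ x a, r x a ∈ Set.Icc (0 : ℝ) 1)
    (hρ : ∀ x, ρ x = ∑ a, π x a * r x a) (hρ' : ∀ x, ρ' x = ∑ a, π' x a * r x a) (x : X) :
    |ρ x - ρ' x| ≤ (∑ a, |π x a - π' x a|) / 2 := by
  rw [hρ, hρ']
  exact abs_sub_dotProduct_le_half_sum_abs (hπ x) (hπ' x) (hr x)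

lemma sum_abs_sub_le_of_eq_sum_mul [Fintype X] {M M' : Matrix X X ℝ}
    (hP : ∀ x a, P x a ∈ stdSimplex ℝ X)
    (hM : ∀ x y, M x y = ∑ a, π x a * P x a y) (hM' : ∀ x y, M' x y = ∑ a, π' x a * P x a y)
    (x : X) : ∑ y, |M x y - M' x y| ≤ ∑ a, |π x a - π' x a| := by
  simp only [hM, hM']
  exact sum_abs_vecMul_sub_vecMul_le (hP x)

end Policy

theorem stmt12_general (X A : Type*) [Fintype X] [DecidableEq X] [Fintype A]
    [Nonempty X]
    -- transition kernel
    (P : X → A → X → ℝ)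
    (hPnn : ∀ x a x', 0 ≤ P x a x') (hPsum : ∀ x a, ∑ x', P x a x' = 1)
    -- reward in [0,1]
    (r : X → A → ℝ) (hr0 : ∀ x a, 0 ≤ r x a) (hr1 : ∀ x a, r x a ≤ 1)
    -- policies π and π'
    (π π' : X → A → ℝ)
    (hπnn : ∀ x a, 0 ≤ π x a) (hπsum : ∀ x, ∑ a, π x a = 1)
    (hπ'nn : ∀ x a, 0 ≤ π' x a) (hπ'sum : ∀ x, ∑ a, π' x a = 1)
    -- induced transition matrices and rewards
    (Pπ Pπ' : Matrix X X ℝ)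
    (hPπ : ∀ x x', Pπ x x' = ∑ a, π x a * P x a x')
    (hPπ' : ∀ x x', Pπ' x x' = ∑ a, π' x a * P x a x')
    (rπ rπ' : X → ℝ)
    (hrπ : ∀ x, rπ x = ∑ a, π x a * r x a)
    (hrπ' : ∀ x, rπ' x = ∑ a, π' x a * r x a)
    -- contraction condition with parameter τ for both chains
    (τ : ℝ) (hτ : 1 ≤ τ)
    (hcontr : ∀ μ μ' : X → ℝ, (∀ x, 0 ≤ μ x) → (∑ x, μ x = 1) →
      (∀ x, 0 ≤ μ' x) → (∑ x, μ' x = 1) →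
      ∑ x', |∑ x, (μ x - μ' x) * Pπ x x'| ≤ Real.exp (-1 / τ) * ∑ x, |μ x - μ' x|)
    (hcontr' : ∀ μ μ' : X → ℝ, (∀ x, 0 ≤ μ x) → (∑ x, μ x = 1) →
      (∀ x, 0 ≤ μ' x) → (∑ x, μ' x = 1) →
      ∑ x', |∑ x, (μ x - μ' x) * Pπ' x x'| ≤ Real.exp (-1 / τ) * ∑ x, |μ x - μ' x|)
    -- stationary distributions and average rewards
    (μπ μπ' : X → ℝ)
    (hμnn : ∀ x, 0 ≤ μπ x) (hμsum : ∑ x, μπ x = 1)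
    (hstat : ∀ x', ∑ x, μπ x * Pπ x x' = μπ x')
    (hμ'nn : ∀ x, 0 ≤ μπ' x) (hμ'sum : ∑ x, μπ' x = 1)
    (hstat' : ∀ x', ∑ x, μπ' x * Pπ' x x' = μπ' x')
    (lam lam' : ℝ)
    (hlam : lam = ∑ x, μπ x * rπ x) (hlam' : lam' = ∑ x, μπ' x * rπ' x)
    -- state value functions
    (V V' : X → ℝ)
    (hV : ∀ x, V x = ∑' t : ℕ, ((Pπ ^ t).mulVec rπ x - lam))
    (hV' : ∀ x, V' x = ∑' t : ℕ, ((Pπ' ^ t).mulVec rπ' x - lam'))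
    -- state-action value functions
    (Q Q' : X → A → ℝ)
    (hQ : ∀ x a, Q x a = r x a - lam + ∑ x', P x a x' * V x')
    (hQ' : ∀ x a, Q' x a = r x a - lam' + ∑ x', P x a x' * V' x')
    -- truncation horizon and policy distance
    (K : ℕ) (hK : 6 * τ ≤ (K : ℝ))
    (N : ℕ) (hN : N = ⌈4 * τ * Real.logb 2 (K : ℝ)⌉₊)
    (Δ : ℝ)
    (hΔ : Δ = Finset.univ.sup' Finset.univ_nonempty
      (fun x : X => ∑ a, |π x a - π' x a|)) :
    ∀ (x : X) (a : A), |Q x a - Q' x a|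
      ≤ ((N : ℝ) ^ 2 + (N : ℝ) + (2 * τ + 3) * ((N : ℝ) + 1)) * Δ
        + 2 / (K : ℝ) ^ 3 := by
  intro x a
  set q := Real.exp (-1 / τ)
  have hτ0 : 0 < τ := by linarith
  have hq1 : q < 1 := Real.exp_lt_one_iff.2 (div_neg_of_neg_of_pos (by norm_num) hτ0)
  have hP : ∀ x a, P x a ∈ stdSimplex ℝ X := fun x a => ⟨hPnn x a, hPsum x a⟩
  have hΔx : ∀ x, ∑ a, |π x a - π' x a| ≤ Δ := fun x => by
    rw [hΔ]; exact le_sup' (fun y => ∑ a, |π y a - π' y a|) (mem_univ x)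
  have hΔ0 : 0 ≤ Δ := (sum_nonneg fun a _ => abs_nonneg _).trans (hΔx x)
  have hπ : ∀ x, π x ∈ stdSimplex ℝ A := fun x => ⟨hπnn x, hπsum x⟩
  have hπ' : ∀ x, π' x ∈ stdSimplex ℝ A := fun x => ⟨hπ'nn x, hπ'sum x⟩
  have hrIcc : ∀ x a, r x a ∈ Set.Icc (0 : ℝ) 1 := fun x a => ⟨hr0 x a, hr1 x a⟩
  have hC : IsContractingChain Pπ q μπ := ⟨mem_rowStochastic_of_eq_sum_mul hP hπ hPπ,
    fun μ hμ ν hν => hcontr μ ν hμ.1 hμ.2 hν.1 hν.2, ⟨hμnn, hμsum⟩, funext hstat⟩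
  have hC' : IsContractingChain Pπ' q μπ' := ⟨mem_rowStochastic_of_eq_sum_mul hP hπ' hPπ',
    fun μ hμ ν hν => hcontr' μ ν hμ.1 hμ.2 hν.1 hν.2, ⟨hμ'nn, hμ'sum⟩, funext hstat'⟩
  have hr := mem_Icc_of_eq_sum_mul hπ hrIcc hrπ
  have hr' := mem_Icc_of_eq_sum_mul hπ' hrIcc hrπ'
  have hrow : ∀ x, ∑ y, |Pπ x y - Pπ' x y| ≤ Δ := fun x =>
    (sum_abs_sub_le_of_eq_sum_mul hP hPπ hPπ' x).trans (hΔx x)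
  have hrr' : ∀ x, |rπ x - rπ' x| ≤ Δ / 2 := fun x =>
    (abs_sub_le_of_eq_sum_mul hπ hπ' hrIcc hrπ hrπ' x).trans (by linarith [hΔx x])
  obtain rfl : lam = μπ ⬝ᵥ rπ := hlam
  obtain rfl : lam' = μπ' ⬝ᵥ rπ' := hlam'
  have hgain : |μπ ⬝ᵥ rπ - μπ' ⬝ᵥ rπ'| ≤ (τ + 2) * (Δ / 2) := by
    refine (hC.abs_dotProduct_sub_dotProduct_le hC' hq1 hr hrow hrr').trans ?_
    have := mul_le_mul_of_nonneg_left (inv_one_sub_exp_neg_inv_le hτ0) hΔ0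
    rw [div_eq_mul_inv Δ]
    linarith
  have htail : q ^ N / (1 - q) ≤ 1 / K ^ 3 :=
    exp_neg_inv_pow_div_le hτ0 (by linarith) (by rw [hN]; exact Nat.le_ceil _)
  have hVV' : ∀ y, |V y - V' y| ≤ N * (N * (Δ / 2) + (τ + 2) * (Δ / 2)) + 2 * (1 / K ^ 3) :=
    fun y => by
      rw [hV y, hV' y]
      exact (hC.abs_relativeValue_sub_le hC' (Real.exp_pos _).le hq1 hr hr' hrow hrr' N y).trans
        (by gcongr)
  have hN0 : (0 : ℝ) ≤ N := N.cast_nonneg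
  rw [hQ, hQ']
  refine (abs_sub_add_dotProduct_sub_le (hP x a) hgain hVV').trans ?_
  rw [mul_one_div]
  nlinarith [mul_nonneg (mul_nonneg hΔ0 hN0) hN0, mul_nonneg hΔ0 hN0,
    mul_nonneg (mul_nonneg hΔ0 hN0) hτ0.le, mul_nonneg hΔ0 hτ0.le]

/-- Relative Q-function error lemma: the change in state-action value functions
of two policies of a uniformly fast-mixing average-reward MDP is controlled by
the maximal per-state ℓ1-distance Δ between the policies. -/
theorem stmt12 (X A : Type*) [Fintype X] [DecidableEq X] [Fintype A]
    [Nonempty X] [Nonempty A]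
    -- transition kernel
    (P : X → A → X → ℝ)
    (hPnn : ∀ x a x', 0 ≤ P x a x') (hPsum : ∀ x a, ∑ x', P x a x' = 1)
    -- reward in [0,1]
    (r : X → A → ℝ) (hr0 : ∀ x a, 0 ≤ r x a) (hr1 : ∀ x a, r x a ≤ 1)
    -- policies π and π'
    (π π' : X → A → ℝ)
    (hπnn : ∀ x a, 0 ≤ π x a) (hπsum : ∀ x, ∑ a, π x a = 1)
    (hπ'nn : ∀ x a, 0 ≤ π' x a) (hπ'sum : ∀ x, ∑ a, π' x a = 1)
    -- induced transition matrices and rewards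
    (Pπ Pπ' : Matrix X X ℝ)
    (hPπ : ∀ x x', Pπ x x' = ∑ a, π x a * P x a x')
    (hPπ' : ∀ x x', Pπ' x x' = ∑ a, π' x a * P x a x')
    (rπ rπ' : X → ℝ)
    (hrπ : ∀ x, rπ x = ∑ a, π x a * r x a)
    (hrπ' : ∀ x, rπ' x = ∑ a, π' x a * r x a)
    -- contraction condition with parameter τ for both chains
    (τ : ℝ) (hτ : 1 ≤ τ)
    (hcontr : ∀ μ μ' : X → ℝ, (∀ x, 0 ≤ μ x) → (∑ x, μ x = 1) →
      (∀ x, 0 ≤ μ' x) → (∑ x, μ' x = 1) →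
      ∑ x', |∑ x, (μ x - μ' x) * Pπ x x'| ≤ Real.exp (-1 / τ) * ∑ x, |μ x - μ' x|)
    (hcontr' : ∀ μ μ' : X → ℝ, (∀ x, 0 ≤ μ x) → (∑ x, μ x = 1) →
      (∀ x, 0 ≤ μ' x) → (∑ x, μ' x = 1) →
      ∑ x', |∑ x, (μ x - μ' x) * Pπ' x x'| ≤ Real.exp (-1 / τ) * ∑ x, |μ x - μ' x|)
    -- stationary distributions and average rewards
    (μπ μπ' : X → ℝ)
    (hμnn : ∀ x, 0 ≤ μπ x) (hμsum : ∑ x, μπ x = 1)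
    (hstat : ∀ x', ∑ x, μπ x * Pπ x x' = μπ x')
    (hμ'nn : ∀ x, 0 ≤ μπ' x) (hμ'sum : ∑ x, μπ' x = 1)
    (hstat' : ∀ x', ∑ x, μπ' x * Pπ' x x' = μπ' x')
    (lam lam' : ℝ)
    (hlam : lam = ∑ x, μπ x * rπ x) (hlam' : lam' = ∑ x, μπ' x * rπ' x)
    -- state value functions
    (V V' : X → ℝ)
    (hV : ∀ x, V x = ∑' t : ℕ, ((Pπ ^ t).mulVec rπ x - lam))
    (hV' : ∀ x, V' x = ∑' t : ℕ, ((Pπ' ^ t).mulVec rπ' x - lam'))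
    -- state-action value functions
    (Q Q' : X → A → ℝ)
    (hQ : ∀ x a, Q x a = r x a - lam + ∑ x', P x a x' * V x')
    (hQ' : ∀ x a, Q' x a = r x a - lam' + ∑ x', P x a x' * V' x')
    -- truncation horizon and policy distance
    (K : ℕ) (hK : 6 * τ ≤ (K : ℝ))
    (N : ℕ) (hN : N = ⌈4 * τ * Real.logb 2 (K : ℝ)⌉₊)
    (Δ : ℝ)
    (hΔ : Δ = Finset.univ.sup' Finset.univ_nonempty
      (fun x : X => ∑ a, |π x a - π' x a|)) :
    ∀ (x : X) (a : A), |Q x a - Q' x a|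
      ≤ ((N : ℝ) ^ 2 + (N : ℝ) + (2 * τ + 3) * ((N : ℝ) + 1)) * Δ
        + 2 / (K : ℝ) ^ 3 :=
  stmt12_general X A P hPnn hPsum r hr0 hr1 π π' hπnn hπsum hπ'nn hπ'sum Pπ Pπ' hPπ hPπ' rπ rπ' hrπ
    hrπ' τ hτ hcontr hcontr' μπ μπ' hμnn hμsum hstat hμ'nn hμ'sum hstat' lam lam' hlam hlam' V V' hV
    hV' Q Q' hQ hQ' K hK N hN Δ hΔ
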